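/- Let f be in the class BT_B with Taylor coefficients a_n, and let γ_1 = a_2/2, γ_2 = (1/2)(a_3 − a_2²/2) be its first two logarithmic coefficients. Then |γ_2| − |γ_1| ≥ −1/(2·√23). -/

import Mathlib

/-!
Write `f' = S ∘ ω` with `S w = (1 + tanh w)^(1/2)`. Since `S(0) = 1`, `S'(0) = 1/2`,
`S''(0) = -1/4`, the coefficients `ω = c₁ z + c₂ z² + ⋯` of the Schwarz function give
`a₂ = c₁/4` and `a₃ = c₂/6 - c₁²/24`, hence `γ₁ = c₁/8` and `γ₂ = c₂/12 - 7c₁²/192`.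
Schwarz–Pick applied to `ω(z)/z` yields `|c₂| ≤ 1 - |c₁|²`, so
`|γ₂| - |γ₁| ≥ max(0, 23|c₁|²/192 - 1/12) - |c₁|/8`, whose minimum over `|c₁| ≤ 1` is
`-1/(2√23)`, attained at `|c₁| = 4/√23`.
-/

open Complex Metric

/-- Principal branch of the square root: `w^(1/2) = exp((1/2) * Log w)`. -/
noncomputable def psqrt (w : ℂ) : ℂ := Complex.exp ((1/2 : ℂ) * Complex.log w)

/-- The `n`-th Taylor coefficient of `f` at `0`, i.e. `f^(n)(0)/n!`. -/
noncomputable def tCoeff (f : ℂ → ℂ) (n : ℕ) : ℂ := iteratedDeriv n f 0 / n.factorial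

/-- The class `BT_B` of bounded turning functions associated with the bean-shaped domain:
`f` is analytic on the unit disk, `f 0 = 0`, `f' 0 = 1`, `f` injective on the disk,
and `f'(z) = (1 + tanh (ω z))^(1/2)` for a Schwarz function `ω`. -/
def IsBTB (f : ℂ → ℂ) : Prop :=
  AnalyticOnNhd ℂ f (ball 0 1) ∧ f 0 = 0 ∧ deriv f 0 = 1 ∧
  Set.InjOn f (ball 0 1) ∧
  ∃ ω : ℂ → ℂ, AnalyticOnNhd ℂ ω (ball 0 1) ∧ ω 0 = 0 ∧
    (∀ z ∈ ball (0:ℂ) 1, ‖ω z‖ < 1) ∧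
    (∀ z ∈ ball (0:ℂ) 1, deriv f z = psqrt (1 + Complex.tanh (ω z)))

open Filter Topology Set
open scoped ComplexConjugate

theorem Complex.norm_sub_le_norm_one_sub_conj_mul {c w : ℂ} (hc : ‖c‖ ≤ 1) (hw : ‖w‖ ≤ 1) :
    ‖w - c‖ ≤ ‖1 - conj c * w‖ := by
  have hgap : normSq (1 - conj c * w) - normSq (w - c) = (1 - normSq c) * (1 - normSq w) := by
    simp only [normSq_apply, sub_re, sub_im, mul_re, mul_im, one_re, one_im, conj_re, conj_im]
    ring
  have hc' : normSq c ≤ 1 := by rw [normSq_eq_norm_sq]; nlinarith [norm_nonneg c]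
  have hw' : normSq w ≤ 1 := by rw [normSq_eq_norm_sq]; nlinarith [norm_nonneg w]
  rw [← sq_le_sq₀ (norm_nonneg _) (norm_nonneg _), ← normSq_eq_norm_sq, ← normSq_eq_norm_sq]
  nlinarith [mul_nonneg (sub_nonneg.2 hc') (sub_nonneg.2 hw')]

/-- Schwarz–Pick inequality at the centre of the disc: compose `h` with the disc automorphism
sending `h 0` to `0` and apply the Schwarz lemma; if `‖h 0‖ = 1`, then `h` is constant by the
maximum modulus principle. -/
theorem Complex.norm_deriv_le_one_sub_norm_sq {h : ℂ → ℂ} (hd : DifferentiableOn ℂ h (ball 0 1))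
    (hmaps : MapsTo h (ball 0 1) (closedBall 0 1)) : ‖deriv h 0‖ ≤ 1 - ‖h 0‖ ^ 2 := by
  have h0 : (0 : ℂ) ∈ ball (0 : ℂ) 1 := mem_ball_self one_pos
  have hball : ball (0 : ℂ) 1 ∈ 𝓝 0 := ball_mem_nhds 0 one_pos
  rcases (mem_closedBall_zero_iff.1 (hmaps h0)).lt_or_eq with hlt | heq
  · set c := h 0
    have hden : ∀ z ∈ ball (0 : ℂ) 1, 1 - conj c * h z ≠ 0 := by
      intro z hz hzero
      have : ‖conj c * h z‖ < 1 := by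
        rw [norm_mul, norm_conj]
        nlinarith [norm_nonneg c, mem_closedBall_zero_iff.1 (hmaps hz)]
      rw [← sub_eq_zero.1 hzero] at this
      simp at this
    set φ : ℂ → ℂ := fun z => (h z - c) / (1 - conj c * h z)
    have hφd : DifferentiableOn ℂ φ (ball 0 1) :=
      (hd.sub_const c).div ((differentiableOn_const _).sub (hd.const_mul _)) hden
    have hφmaps : MapsTo φ (ball 0 1) (closedBall (φ 0) 1) := by
      intro z hz
      rw [show φ 0 = 0 by simp [φ, c], mem_closedBall_zero_iff, norm_div]
      exact div_le_one_of_le₀ (norm_sub_le_norm_one_sub_conj_mul hlt.le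
        (mem_closedBall_zero_iff.1 (hmaps hz))) (norm_nonneg _)
    have hpos : 0 < 1 - ‖c‖ ^ 2 := sub_pos.2 (pow_lt_one₀ (norm_nonneg c) hlt two_ne_zero)
    have hφ' : deriv φ 0 = deriv h 0 / ((1 - ‖c‖ ^ 2 : ℝ) : ℂ) := by
      have hh : HasDerivAt h (deriv h 0) 0 := (hd.differentiableAt hball).hasDerivAt
      rw [((hh.sub_const c).fun_div ((hh.const_mul (conj c)).const_sub 1) (hden 0 h0)).deriv]
      have hc : (1 : ℂ) - conj c * c = ((1 - ‖c‖ ^ 2 : ℝ) : ℂ) := by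
        rw [mul_comm, mul_conj, normSq_eq_norm_sq]; push_cast; ring
      have hne : ((1 - ‖c‖ ^ 2 : ℝ) : ℂ) ≠ 0 := by exact_mod_cast hpos.ne'
      simp only [c, sub_self, zero_mul, sub_zero] at hc ⊢
      rw [hc]
      field_simp
    have := norm_deriv_le_one_of_mapsTo_ball hφd hφmaps one_pos
    rwa [hφ', norm_div, norm_real, Real.norm_of_nonneg hpos.le, div_le_one hpos] at this
  · have hmax : IsLocalMax (norm ∘ h) 0 := by
      filter_upwards [hball] with z hz
      simpa [heq] using hmaps hz
    have hconst := eventually_eq_of_isLocalMax_norm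
      (eventually_of_mem hball fun z hz => hd.differentiableAt (isOpen_ball.mem_nhds hz)) hmax
    rw [(EventuallyEq.deriv_eq hconst), deriv_const, heq]
    simp

theorem AnalyticAt.dslope {𝕜 E : Type*} [NontriviallyNormedField 𝕜] [NormedAddCommGroup E]
    [NormedSpace 𝕜 E] {f : 𝕜 → E} {a : 𝕜} (hf : AnalyticAt 𝕜 f a) :
    AnalyticAt 𝕜 (dslope f a) a :=
  let ⟨_, hp⟩ := hf
  hp.has_fpower_series_dslope_fslope.analyticAt

theorem deriv_deriv_eq_two_smul_deriv_dslope {𝕜 E : Type*} [NontriviallyNormedField 𝕜]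
    [NormedAddCommGroup E] [NormedSpace 𝕜 E] [CompleteSpace E] {f : 𝕜 → E} {a : 𝕜}
    (hf : AnalyticAt 𝕜 f a) : deriv (deriv f) a = (2 : 𝕜) • deriv (dslope f a) a := by
  set h := dslope f a
  have hf_eq : f = fun z => f a + (z - a) • h z := by
    funext z; rw [sub_smul_dslope, add_sub_cancel]
  have hderiv : deriv f =ᶠ[𝓝 a] fun z => h z + (z - a) • deriv h z := by
    filter_upwards [hf.dslope.eventually_analyticAt] with z hz
    have hz' : HasDerivAt (fun z => f a + (z - a) • h z) (h z + (z - a) • deriv h z) z :=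
      ((((hasDerivAt_id z).sub_const a).smul hz.differentiableAt.hasDerivAt).const_add
        (f a)).congr_deriv (by simp [h, add_comm])
    rw [hf_eq, hz'.deriv]
  have hsum : HasDerivAt (fun z => h z + (z - a) • deriv h z) ((2 : 𝕜) • deriv h a) a :=
    (hf.dslope.differentiableAt.hasDerivAt.add (((hasDerivAt_id a).sub_const a).smul
      hf.dslope.deriv.differentiableAt.hasDerivAt)).congr_deriv (by simp [h, two_smul])
  rw [hderiv.deriv_eq, hsum.deriv]

theorem norm_deriv_deriv_div_two_le_one_sub_norm_deriv_sq {ω : ℂ → ℂ}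
    (hd : DifferentiableOn ℂ ω (ball 0 1)) (hmaps : MapsTo ω (ball 0 1) (closedBall 0 1))
    (h0 : ω 0 = 0) : ‖deriv (deriv ω) 0 / 2‖ ≤ 1 - ‖deriv ω 0‖ ^ 2 := by
  have hball : ball (0 : ℂ) 1 ∈ 𝓝 0 := ball_mem_nhds 0 one_pos
  have hslope_maps : MapsTo (dslope ω 0) (ball 0 1) (closedBall 0 1) := fun z hz => by
    simpa using norm_dslope_le_div_of_mapsTo_ball hd (by rwa [h0]) hz
  have hpick := norm_deriv_le_one_sub_norm_sq ((differentiableOn_dslope hball).2 hd) hslope_maps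
  rw [deriv_deriv_eq_two_smul_deriv_dslope (hd.analyticAt hball), smul_eq_mul,
    mul_div_cancel_left₀ _ two_ne_zero]
  rwa [dslope_same] at hpick

theorem Complex.hasDerivAt_tanh {w : ℂ} (hw : cosh w ≠ 0) :
    HasDerivAt tanh (1 - tanh w ^ 2) w := by
  have h := (hasDerivAt_sinh w).div (hasDerivAt_cosh w) hw
  rw [show sinh / cosh = tanh from funext fun z => (tanh_eq_sinh_div_cosh z).symm] at h
  refine h.congr_deriv ?_
  rw [tanh_eq_sinh_div_cosh]
  field_simp

/-- The logarithmic derivative `tanh' / (1 + tanh) = (1 - tanh²) / (1 + tanh)` is `1 - tanh`. -/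
theorem hasDerivAt_psqrt_one_add_tanh {w : ℂ} (hw : cosh w ≠ 0)
    (hs : 1 + tanh w ∈ slitPlane) :
    HasDerivAt (fun w => psqrt (1 + tanh w)) (psqrt (1 + tanh w) * ((1 - tanh w) / 2)) w := by
  have h := ((((hasDerivAt_tanh hw).const_add 1).clog hs).const_mul (1 / 2 : ℂ)).cexp
  refine h.congr_deriv ?_
  have hne : (1 : ℂ) + tanh w ≠ 0 := slitPlane_ne_zero hs
  rw [psqrt]
  field_simp
  ring

theorem eventually_hasDerivAt_psqrt_one_add_tanh :
    ∀ᶠ w in 𝓝 (0 : ℂ),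
      HasDerivAt (fun w => psqrt (1 + tanh w)) (psqrt (1 + tanh w) * ((1 - tanh w) / 2)) w := by
  have hcosh : ∀ᶠ w in 𝓝 (0 : ℂ), cosh w ≠ 0 :=
    continuous_cosh.continuousAt.eventually_ne (by simp)
  have hslit : ∀ᶠ w in 𝓝 (0 : ℂ), 1 + tanh w ∈ slitPlane := by
    have hcont : ContinuousAt (fun w => 1 + tanh w) 0 :=
      ((hasDerivAt_tanh (by simp)).continuousAt).const_add 1
    exact hcont.eventually_mem (isOpen_slitPlane.mem_nhds (by simp))
  filter_upwards [hcosh, hslit] with w hw hs using hasDerivAt_psqrt_one_add_tanh hw hs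

@[simp]
theorem psqrt_one : psqrt 1 = 1 := by simp [psqrt]

section Composition

variable {g : ℂ → ℂ} (hg : AnalyticAt ℂ g 0) (hg0 : g 0 = 0)
include hg hg0

theorem eventually_hasDerivAt_psqrt_one_add_tanh_comp :
    ∀ᶠ z in 𝓝 (0 : ℂ), HasDerivAt (fun z => psqrt (1 + tanh (g z)))
      (psqrt (1 + tanh (g z)) * ((1 - tanh (g z)) / 2) * deriv g z) z := by
  have hlim : Tendsto g (𝓝 0) (𝓝 0) := by simpa [hg0] using hg.continuousAt.tendsto
  filter_upwards [hlim.eventually eventually_hasDerivAt_psqrt_one_add_tanh,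
    hg.eventually_analyticAt] with z hS hgz
  exact hS.comp z hgz.differentiableAt.hasDerivAt

theorem deriv_psqrt_one_add_tanh_comp :
    deriv (fun z => psqrt (1 + tanh (g z))) 0 = deriv g 0 / 2 := by
  rw [(eventually_hasDerivAt_psqrt_one_add_tanh_comp hg hg0).self_of_nhds.deriv]
  simp [hg0, div_eq_inv_mul]

theorem deriv_deriv_psqrt_one_add_tanh_comp :
    deriv (deriv fun z => psqrt (1 + tanh (g z))) 0
      = deriv (deriv g) 0 / 2 - deriv g 0 ^ 2 / 4 := by
  have hD := eventually_hasDerivAt_psqrt_one_add_tanh_comp hg hg0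
  have hS : HasDerivAt (fun z => psqrt (1 + tanh (g z))) (deriv g 0 / 2) 0 :=
    hD.self_of_nhds.congr_deriv (by simp [hg0, div_eq_inv_mul])
  have hT : HasDerivAt (fun z => (1 - tanh (g z)) / 2) (-(deriv g 0 / 2)) 0 := by
    have h := ((hasDerivAt_tanh (by simp [hg0])).comp 0 hg.differentiableAt.hasDerivAt)
    exact ((h.const_sub 1).div_const 2).congr_deriv (by simp [hg0, neg_div])
  have hg' : HasDerivAt (deriv g) (deriv (deriv g) 0) 0 :=
    hg.deriv.differentiableAt.hasDerivAt
  have hprod := (hS.fun_mul hT).fun_mul hg'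
  rw [EventuallyEq.deriv_eq (hD.mono fun z hz => hz.deriv), hprod.deriv]
  simp [hg0]
  ring

end Composition

theorem neg_one_div_two_sqrt_23_le {c₁ c₂ : ℂ} (h : ‖c₂‖ ≤ 1 - ‖c₁‖ ^ 2) :
    -(1 / (2 * √23)) ≤ ‖c₂ / 12 - 7 * c₁ ^ 2 / 192‖ - ‖c₁ / 8‖ := by
  have hγ : 7 * ‖c₁‖ ^ 2 / 192 - ‖c₂‖ / 12 ≤ ‖c₂ / 12 - 7 * c₁ ^ 2 / 192‖ :=
    calc 7 * ‖c₁‖ ^ 2 / 192 - ‖c₂‖ / 12 = ‖7 * c₁ ^ 2 / 192‖ - ‖c₂ / 12‖ := by simp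
      _ ≤ ‖7 * c₁ ^ 2 / 192 - c₂ / 12‖ := norm_sub_norm_le _ _
      _ = ‖c₂ / 12 - 7 * c₁ ^ 2 / 192‖ := norm_sub_rev _ _
  have hγ0 := norm_nonneg (c₂ / 12 - 7 * c₁ ^ 2 / 192)
  rw [norm_div, show ‖(8 : ℂ)‖ = 8 by simp]
  have hx := norm_nonneg c₁
  have hy := norm_nonneg c₂
  set s := √23
  have hs : s ^ 2 = 23 := Real.sq_sqrt (by norm_num)
  have hs3 : 3 ≤ s := by nlinarith [Real.sqrt_nonneg 23]
  rw [show 1 / (2 * s) = s / 46 by field_simp; nlinarith]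
  -- Below `‖c₁‖ = 4 / √23` the term `‖c₁‖ / 8` alone is small enough; above it, the
  -- lower bound `hγ` with `‖c₂‖ ≤ 1 - ‖c₁‖²` takes over.
  rcases le_or_gt (‖c₁‖ * s) 4 with hsmall | hlarge
  · nlinarith
  · have : 0 ≤ (‖c₁‖ * s - 4) * (23 * ‖c₁‖ + 4 * s - 24) := by
      apply mul_nonneg <;> nlinarith
    nlinarith

theorem BTB_gamma_diff_lower (f : ℂ → ℂ) (hf : IsBTB f) :
    ‖(1/2) * (tCoeff f 3 - (tCoeff f 2)^2 / 2)‖ - ‖tCoeff f 2 / 2‖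
      ≥ -(1 / (2 * Real.sqrt 23)) := by
  obtain ⟨-, -, -, -, ω, hωa, hω0, hω_lt, hf'⟩ := hf
  have hω : AnalyticAt ℂ ω 0 := hωa 0 (mem_ball_self one_pos)
  have hF : deriv f =ᶠ[𝓝 0] fun z => psqrt (1 + tanh (ω z)) :=
    eventually_of_mem (ball_mem_nhds 0 one_pos) hf'
  have ha₂ : tCoeff f 2 = deriv ω 0 / 4 := by
    rw [tCoeff, iteratedDeriv_succ, iteratedDeriv_one, hF.deriv_eq,
      deriv_psqrt_one_add_tanh_comp hω hω0]
    norm_num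
    ring
  have ha₃ : tCoeff f 3 = (deriv (deriv ω) 0 / 2 - deriv ω 0 ^ 2 / 4) / 6 := by
    rw [tCoeff, iteratedDeriv_succ, iteratedDeriv_succ, iteratedDeriv_one, hF.deriv.deriv_eq,
      deriv_deriv_psqrt_one_add_tanh_comp hω hω0]
    norm_num
  have hpick := norm_deriv_deriv_div_two_le_one_sub_norm_deriv_sq hωa.differentiableOn
    (fun z hz => mem_closedBall_zero_iff.2 (hω_lt z hz).le) hω0
  rw [ha₂, ha₃]
  convert neg_one_div_two_sqrt_23_le hpick using 3 <;> ring
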